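/- arXiv:2509.05002 — 3 statements merged into one kernel-verified Lean document; each statement's English description precedes it below -/
import Mathlib

section
/- Let F be an (n, κ, κ²)-splitter on a vertex set V of size n with κ = p + 2. Then the family Q = { f⁻¹(i) ∪ f⁻¹(j) : f ∈ F, i, j ∈ {1,...,κ²} } is a p-Query-Scheme on V. -/
/-! Given `u`, `v` and `W`, the set `{u, v} ∪ W` has `p + 2` elements, so some `f ∈ F` is injective
on it; then `f⁻¹(f u) ∪ f⁻¹(f v)` contains `u` and `v` and no vertex of `W`. -/

open Finset

theorem disjoint_filter_eq_or_eq_of_injOn {α β : Type*} [Fintype α] [DecidableEq α]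
    [DecidableEq β] {f : α → β} {u v : α} {W : Finset α} (huW : u ∉ W) (hvW : v ∉ W)
    (hf : Set.InjOn f ↑(insert u (insert v W))) :
    Disjoint W (univ.filter fun x => f x = f u ∨ f x = f v) := by
  rw [disjoint_left]
  intro w hwW hw
  have hwS : w ∈ insert u (insert v W) := by simp [hwW]
  rcases (mem_filter.mp hw).2 with hwu | hwv
  · exact huW (hf hwS (by simp) hwu ▸ hwW)
  · exact hvW (hf hwS (by simp) hwv ▸ hwW)

theorem card_insert_insert_of_notMem {α : Type*} [DecidableEq α] {u v : α} {W : Finset α}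
    (huv : u ≠ v) (huW : u ∉ W) (hvW : v ∉ W) : (insert u (insert v W)).card = W.card + 2 := by
  rw [card_insert_of_notMem (by simp [huv, huW]), card_insert_of_notMem hvW]

theorem stmt_5_general {V : Type*} [Fintype V] (p : ℕ)
    (F : Finset (V → Fin ((p + 2) ^ 2)))
    (hsplit : ∀ S : Finset V, S.card = p + 2 → ∃ f ∈ F, Set.InjOn f ↑S) :
    ∀ u v : V, u ≠ v → ∀ W : Finset V, W.card = p → u ∉ W → v ∉ W →
      ∃ f ∈ F, ∃ i j : Fin ((p + 2) ^ 2),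
        u ∈ Finset.univ.filter (fun x => f x = i ∨ f x = j) ∧
        v ∈ Finset.univ.filter (fun x => f x = i ∨ f x = j) ∧
        Disjoint W (Finset.univ.filter (fun x => f x = i ∨ f x = j)) := by
  classical
  intro u v huv W hW huW hvW
  obtain ⟨f, hfF, hinj⟩ :=
    hsplit (insert u (insert v W)) (hW ▸ card_insert_insert_of_notMem huv huW hvW)
  exact ⟨f, hfF, f u, f v, by simp, by simp, disjoint_filter_eq_or_eq_of_injOn huW hvW hinj⟩

/-- If `F` is an `(n, κ, κ²)`-splitter with `κ = p + 2` (for every `κ`-subset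
`S` some `f ∈ F` is injective on `S`), then the family
`{ f⁻¹(i) ∪ f⁻¹(j) : f ∈ F, i j }` is a `p`-Query-Scheme: for all distinct
vertices `u, v, w₁, …, w_p` some set of the family contains `u` and `v` but
none of the `wᵢ`. -/
theorem stmt_5 {V : Type*} [Fintype V] [DecidableEq V] (n p : ℕ)
    (hn : Fintype.card V = n) (hp : 1 ≤ p) (hpn : p + 2 ≤ n)
    (F : Finset (V → Fin ((p + 2) ^ 2)))
    (hsplit : ∀ S : Finset V, S.card = p + 2 → ∃ f ∈ F, Set.InjOn f ↑S) :
    ∀ u v : V, u ≠ v → ∀ W : Finset V, W.card = p → u ∉ W → v ∉ W →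
      ∃ f ∈ F, ∃ i j : Fin ((p + 2) ^ 2),
        u ∈ Finset.univ.filter (fun x => f x = i ∨ f x = j) ∧
        v ∈ Finset.univ.filter (fun x => f x = i ∨ f x = j) ∧
        Disjoint W (Finset.univ.filter (fun x => f x = i ∨ f x = j)) :=
  stmt_5_general p F hsplit
end

section
/- Let G = (V, E) be a k-tree (a maximal graph of treewidth k) and let u, v ∈ V with uv ∉ E. Then there exists a set S ⊆ V \ {u, v} with |S| = k such that u and v lie in different connected components of the induced subgraph G[V \ S]. -/
/-- `(tT, X)` is a tree decomposition of `G`: `tT` is a tree, the bags `X`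
cover all vertices and all edges, and for each vertex the set of bags
containing it induces a connected subgraph of the tree. -/
def IsTreeDecomp {V T : Type*} (G : SimpleGraph V) (tT : SimpleGraph T)
    (X : T → Finset V) : Prop :=
  tT.IsTree ∧
  (∀ v : V, ∃ t : T, v ∈ X t) ∧
  (∀ u v : V, G.Adj u v → ∃ t : T, u ∈ X t ∧ v ∈ X t) ∧
  (∀ v : V, (tT.induce {t : T | v ∈ X t}).Connected)

/-- `G` has treewidth at most `k`: some tree decomposition has all bags of
size at most `k + 1`. -/
def TreewidthAtMost {V : Type*} (G : SimpleGraph V) (k : ℕ) : Prop :=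
  ∃ (T : Type) (tT : SimpleGraph T) (X : T → Finset V),
    IsTreeDecomp G tT X ∧ ∀ t : T, (X t).card ≤ k + 1

/-!
Fix a tree decomposition with bags of size at most `k + 1`. By maximality no bag contains both
`u` and `v` (otherwise the edge `uv` could be added) and `V` has at least `k + 2` vertices
(otherwise one bag `V` would do). On a shortest tree path from a bag `X a ∋ u` to a bag
`X b ∋ v`, let `t` be the neighbour of `a`; then `u ∉ X t`, so `X a ∩ X t` has at most `k`
vertices. Every vertex outside `X a ∩ X t` has all its bags on one side of the tree edge `at`,
and so does every vertex reachable from it avoiding `X a ∩ X t`; hence `X a ∩ X t`, padded to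
`k` vertices other than `u, v`, separates `u` (side of `a`) from `v` (side of `t`).
-/

open SimpleGraph

lemma SimpleGraph.Connected.exists_adj_reachable_deleteEdges {T : Type*} {H : SimpleGraph T}
    (hH : H.Connected) {A B : Set T} (hA : A.Nonempty) (hB : B.Nonempty) (hAB : Disjoint A B) :
    ∃ a t b, a ∈ A ∧ t ∉ A ∧ b ∈ B ∧ H.Adj a t ∧ (H.deleteEdges {s(a, t)}).Reachable t b := by
  obtain ⟨⟨a, b⟩, ⟨ha, hb⟩, hmin⟩ :=
    (measure fun p : T × T => H.dist p.1 p.2).wf.has_min (A ×ˢ B) (hA.prod hB)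
  obtain ⟨p, hp⟩ := hH.exists_walk_length_eq_dist a b
  have hpath := p.isPath_of_length_eq_dist hp
  cases p with
  | nil => exact (hAB.ne_of_mem ha hb rfl).elim
  | @cons _ t _ hat q =>
    rw [Walk.cons_isPath_iff] at hpath
    have hq : q.length + 1 = H.dist a b := by simpa using hp
    refine ⟨a, t, b, ha, fun ht => hmin (t, b) ⟨ht, hb⟩ ?_, hb, hat,
      ⟨q.toDeleteEdge _ fun he => hpath.2 (q.fst_mem_support_of_mem_edges he)⟩⟩
    change H.dist t b < H.dist a b
    have := dist_le q
    omega

lemma treewidthAtMost_of_card_le {V : Type*} [Fintype V] (G : SimpleGraph V) {k : ℕ}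
    (h : Fintype.card V ≤ k + 1) : TreewidthAtMost G k :=
  ⟨PUnit, ⊥, fun _ => Finset.univ,
    ⟨.of_subsingleton, fun _ => ⟨⟨⟩, Finset.mem_univ _⟩,
      fun _ _ _ => ⟨⟨⟩, Finset.mem_univ _, Finset.mem_univ _⟩,
      fun _ => @Connected.of_subsingleton _ _ ⟨⟨⟨⟩, Finset.mem_univ _⟩⟩ _⟩,
    fun _ => h⟩

lemma Finset.exists_superset_card_eq_of_disjoint {α : Type*} [Fintype α] [DecidableEq α]
    {s t : Finset α} {n : ℕ} (hst : Disjoint s t) (hs : s.card ≤ n)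
    (hn : n + t.card ≤ Fintype.card α) : ∃ u, s ⊆ u ∧ Disjoint u t ∧ u.card = n := by
  obtain ⟨u, hsu, hut, hu⟩ := Finset.exists_subsuperset_card_eq
    (Finset.subset_compl_iff_disjoint_right.mpr hst) hs (by rw [Finset.card_compl]; omega)
  exact ⟨u, hsu, Finset.subset_compl_iff_disjoint_right.mp hut, hu⟩

namespace IsTreeDecomp

variable {V T : Type*} {G : SimpleGraph V} {tT : SimpleGraph T} {X : T → Finset V}

lemma sup_fromEdgeSet (hX : IsTreeDecomp G tT X) {u v : V} {t : T} (hu : u ∈ X t)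
    (hv : v ∈ X t) : IsTreeDecomp (G ⊔ fromEdgeSet {s(u, v)}) tT X := by
  refine ⟨hX.1, hX.2.1, fun a b hab => ?_, hX.2.2.2⟩
  rcases hab with hab | ⟨hab, -⟩
  · exact hX.2.2.1 a b hab
  · rcases Sym2.eq_iff.mp hab with ⟨rfl, rfl⟩ | ⟨rfl, rfl⟩
    exacts [⟨t, hu, hv⟩, ⟨t, hv, hu⟩]

variable [DecidableEq V]

lemma reachable_deleteEdges_of_mem (hX : IsTreeDecomp G tT X) {a t : T} {w : V}
    (hw : w ∉ X a ∩ X t) {t₁ t₂ : T} (h₁ : w ∈ X t₁) (h₂ : w ∈ X t₂) :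
    (tT.deleteEdges {s(a, t)}).Reachable t₁ t₂ := by
  let f : tT.induce {t | w ∈ X t} →g tT.deleteEdges {s(a, t)} :=
    ⟨Subtype.val, fun {x y} hxy => deleteEdges_adj.mpr ⟨hxy, fun he => hw ?_⟩⟩
  · exact ((hX.2.2.2 w) ⟨t₁, h₁⟩ ⟨t₂, h₂⟩).map f
  rcases Sym2.eq_iff.mp (Set.mem_singleton_iff.mp he) with ⟨hx, hy⟩ | ⟨hx, hy⟩
  · exact Finset.mem_inter.mpr ⟨hx ▸ x.2, hy ▸ y.2⟩
  · exact Finset.mem_inter.mpr ⟨hy ▸ y.2, hx ▸ x.2⟩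

lemma reachable_deleteEdges_of_reachable_induce (hX : IsTreeDecomp G tT X) {a t : T}
    {s : Set V} (hs : ∀ x ∈ s, x ∉ X a ∩ X t) {x y : s} (hxy : (G.induce s).Reachable x y)
    {t₁ t₂ : T} (hx : ↑x ∈ X t₁) (hy : ↑y ∈ X t₂) :
    (tT.deleteEdges {s(a, t)}).Reachable t₁ t₂ := by
  obtain ⟨p⟩ := hxy
  induction p generalizing t₁ with
  | @nil w => exact hX.reachable_deleteEdges_of_mem (hs _ w.2) hx hy
  | @cons x z _ hxz _ ih =>
    obtain ⟨t', hx', hz'⟩ := hX.2.2.1 _ _ hxz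
    exact (hX.reachable_deleteEdges_of_mem (hs _ x.2) hx hx').trans (ih hz' hy)

end IsTreeDecomp

/-- In a `k`-tree (a graph of treewidth at most `k` to which no edge can be
added without exceeding treewidth `k`), any two non-adjacent vertices `u ≠ v`
can be separated by a set `S` of exactly `k` vertices avoiding `u` and `v`. -/
theorem stmt_6 {V : Type*} [Fintype V] [DecidableEq V] (G : SimpleGraph V)
    (k : ℕ) (htw : TreewidthAtMost G k)
    (hmax : ∀ u v : V, u ≠ v → ¬ G.Adj u v →
      ¬ TreewidthAtMost (G ⊔ SimpleGraph.fromEdgeSet {s(u, v)}) k)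
    (u v : V) (huv : u ≠ v) (hadj : ¬ G.Adj u v) :
    ∃ S : Finset V, S.card = k ∧ ∃ (hu : u ∉ S) (hv : v ∉ S),
      ¬ (G.induce {x : V | x ∉ S}).Reachable ⟨u, hu⟩ ⟨v, hv⟩ := by
  obtain ⟨T, tT, X, hX, hsize⟩ := htw
  have hcard : k + 2 ≤ Fintype.card V := by
    by_contra! h
    exact hmax u v huv hadj (treewidthAtMost_of_card_le _ (by omega))
  have hdisj : Disjoint {t | u ∈ X t} {t | v ∈ X t} := Set.disjoint_left.mpr
    fun t hu hv => hmax u v huv hadj ⟨T, tT, X, hX.sup_fromEdgeSet hu hv, hsize⟩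
  obtain ⟨a, t, b, hua, hut, hvb, hat, htb⟩ :=
    hX.1.1.exists_adj_reachable_deleteEdges (hX.2.1 u) (hX.2.1 v) hdisj
  set S₀ := X a ∩ X t
  have huS₀ : u ∉ S₀ := fun h => hut (Finset.mem_inter.mp h).2
  have hvS₀ : v ∉ S₀ := fun h => Set.disjoint_left.mp hdisj hua (Finset.mem_inter.mp h).1
  have hS₀ : S₀.card < (X a).card := Finset.card_lt_card <|
    (Finset.ssubset_iff_of_subset Finset.inter_subset_left).mpr ⟨u, hua, huS₀⟩
  obtain ⟨S, hS₀S, hS, hScard⟩ := Finset.exists_superset_card_eq_of_disjoint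
    (s := S₀) (t := {u, v}) (n := k) (by simp [huS₀, hvS₀]) (by have := hsize a; omega)
    (by rw [Finset.card_pair huv]; omega)
  obtain ⟨huS, hvS⟩ : u ∉ S ∧ v ∉ S := by simpa using hS
  refine ⟨S, hScard, huS, hvS, fun h => ?_⟩
  have hsep := hX.reachable_deleteEdges_of_reachable_induce
    (fun x (hx : x ∉ S) hx₀ => hx (hS₀S hx₀)) h hua hvb
  exact isAcyclic_iff_forall_adj_isBridge.mp hX.1.2 hat (hsep.trans htb.symm)
end

section
/- Fix disjoint vertex sets C₁, C₂ ⊆ V each of size η, and let 𝒢_η be the family of graphs on V in which C₁ and C₂ each induce a clique, there are no edges incident to V \ (C₁ ∪ C₂), and the edges between C₁ and C₂ are arbitrary. For any graph G ∈ 𝒢_η and any query set S ⊆ V, the partition of S into connected components of G[S] is one of exactly at most two possibilities: either the components are the singletons of S \ (C₁∪C₂) together with S ∩ C₁ and S ∩ C₂ separately (when nonempty), or the singletons of S \ (C₁∪C₂) together with (S ∩ C₁) ∪ (S ∩ C₂) as one component. -/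
/-!
Every edge of `G` lies inside `C₁ ∪ C₂`, and each `Cᵢ` is a clique, so in `G[S]` the vertices outside
`C₁ ∪ C₂` are isolated while `S ∩ C₁` and `S ∩ C₂` are each connected. The only freedom left is
whether some edge of `G[S]` joins `S ∩ C₁` to `S ∩ C₂`: if so these two merge into one component,
otherwise they stay apart.
-/

namespace SimpleGraph

variable {V : Type*} {G : SimpleGraph V}

theorem reachable_iff_of_equivalence {r : V → V → Prop} (hr : Equivalence r)
    (hadj : ∀ ⦃u v⦄, G.Adj u v → r u v) (hreach : ∀ ⦃u v⦄, r u v → G.Reachable u v) (u v : V) :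
    G.Reachable u v ↔ r u v := by
  refine ⟨fun h ↦ ?_, fun h ↦ hreach h⟩
  rw [reachable_iff_reflTransGen] at h
  exact Relation.reflTransGen_le_of_equivalence_of_le hr hadj u v h

variable {S K K₁ K₂ : Set V}

theorem IsClique.induce_reachable (hK : G.IsClique K) {x y : S} (hx : (x : V) ∈ K)
    (hy : (y : V) ∈ K) : (G.induce S).Reachable x y := by
  obtain rfl | hxy := eq_or_ne x y
  · rfl
  · exact (induce_adj.2 (hK hx hy (Subtype.coe_injective.ne hxy))).reachable

theorem induce_reachable_iff_of_adj_across (h₁ : G.IsClique K₁) (h₂ : G.IsClique K₂)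
    (hsupp : G.support ⊆ K₁ ∪ K₂)
    (hacross : ∃ a b : S, (a : V) ∈ K₁ ∧ (b : V) ∈ K₂ ∧ G.Adj a b) (x y : S) :
    (G.induce S).Reachable x y ↔ x = y ∨ ((x : V) ∈ K₁ ∪ K₂ ∧ (y : V) ∈ K₁ ∪ K₂) := by
  obtain ⟨a, b, ha, hb, hab⟩ := hacross
  have reach_a : ∀ z : S, (z : V) ∈ K₁ ∪ K₂ → (G.induce S).Reachable z a := by
    rintro z (hz | hz)
    · exact h₁.induce_reachable hz ha
    · exact (h₂.induce_reachable hz hb).trans (induce_adj.2 hab.symm).reachable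
  apply reachable_iff_of_equivalence
  refine ⟨fun _ ↦ .inl rfl, ?_, ?_⟩
  · rintro _ _ (rfl | ⟨hu, hv⟩)
    exacts [.inl rfl, .inr ⟨hv, hu⟩]
  · rintro _ _ _ (rfl | ⟨hu, hv⟩) (rfl | ⟨hv', hw⟩)
    exacts [.inl rfl, .inr ⟨hv', hw⟩, .inr ⟨hu, hv⟩, .inr ⟨hu, hw⟩]
  · exact fun u v huv ↦ .inr ⟨hsupp ⟨_, huv⟩, hsupp ⟨_, huv.symm⟩⟩
  · rintro u v (rfl | ⟨hu, hv⟩)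
    exacts [.rfl, (reach_a u hu).trans (reach_a v hv).symm]

theorem induce_reachable_iff_of_not_adj_across (hdisj : Disjoint K₁ K₂) (h₁ : G.IsClique K₁)
    (h₂ : G.IsClique K₂) (hsupp : G.support ⊆ K₁ ∪ K₂)
    (hacross : ∀ a b : S, (a : V) ∈ K₁ → (b : V) ∈ K₂ → ¬G.Adj a b) (x y : S) :
    (G.induce S).Reachable x y ↔
      x = y ∨ ((x : V) ∈ K₁ ∧ (y : V) ∈ K₁) ∨ ((x : V) ∈ K₂ ∧ (y : V) ∈ K₂) := by
  apply reachable_iff_of_equivalence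
  refine ⟨fun _ ↦ .inl rfl, ?_, ?_⟩
  · rintro _ _ (rfl | ⟨hu, hv⟩ | ⟨hu, hv⟩)
    exacts [.inl rfl, .inr (.inl ⟨hv, hu⟩), .inr (.inr ⟨hv, hu⟩)]
  · rintro _ _ _ (rfl | ⟨hu, hv⟩ | ⟨hu, hv⟩) (rfl | ⟨hv', hw⟩ | ⟨hv', hw⟩)
    exacts [.inl rfl, .inr (.inl ⟨hv', hw⟩), .inr (.inr ⟨hv', hw⟩),
      .inr (.inl ⟨hu, hv⟩), .inr (.inl ⟨hu, hw⟩), (Set.disjoint_left.1 hdisj hv hv').elim,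
      .inr (.inr ⟨hu, hv⟩), (Set.disjoint_left.1 hdisj hv' hv).elim, .inr (.inr ⟨hu, hw⟩)]
  · intro u v huv
    rcases hsupp ⟨_, huv⟩ with hu | hu <;> rcases hsupp ⟨_, huv.symm⟩ with hv | hv
    exacts [.inr (.inl ⟨hu, hv⟩), (hacross u v hu hv huv).elim,
      (hacross v u hv hu huv.symm).elim, .inr (.inr ⟨hu, hv⟩)]
  · rintro u v (rfl | ⟨hu, hv⟩ | ⟨hu, hv⟩)
    exacts [.rfl, h₁.induce_reachable hu hv, h₂.induce_reachable hu hv]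

end SimpleGraph

theorem stmt_14_general {V : Type*} [DecidableEq V] (C₁ C₂ : Finset V)
    (hdisj : Disjoint C₁ C₂)
    (G : SimpleGraph V)
    (hclique1 : ∀ u ∈ C₁, ∀ v ∈ C₁, u ≠ v → G.Adj u v)
    (hclique2 : ∀ u ∈ C₂, ∀ v ∈ C₂, u ≠ v → G.Adj u v)
    (hsupp : ∀ u v : V, G.Adj u v → (u ∈ C₁ ∪ C₂ ∧ v ∈ C₁ ∪ C₂))
    (S : Set V) :
    (∀ x y : S, (G.induce S).Reachable x y ↔
        x = y ∨ ((x : V) ∈ C₁ ∧ (y : V) ∈ C₁) ∨ ((x : V) ∈ C₂ ∧ (y : V) ∈ C₂)) ∨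
    (∀ x y : S, (G.induce S).Reachable x y ↔
        x = y ∨ ((x : V) ∈ C₁ ∪ C₂ ∧ (y : V) ∈ C₁ ∪ C₂)) := by
  have hclique1' : G.IsClique (C₁ : Set V) := hclique1
  have hclique2' : G.IsClique (C₂ : Set V) := hclique2
  have hsupp' : G.support ⊆ (C₁ : Set V) ∪ C₂ := fun u ⟨v, huv⟩ ↦ by
    simpa only [← Finset.coe_union, Finset.mem_coe] using (hsupp u v huv).1
  by_cases hacross : ∃ a b : S, (a : V) ∈ C₁ ∧ (b : V) ∈ C₂ ∧ G.Adj a b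
  · right
    intro x y
    simpa only [← Finset.coe_union, Finset.mem_coe] using
      SimpleGraph.induce_reachable_iff_of_adj_across hclique1' hclique2' hsupp' hacross x y
  · push Not at hacross
    exact .inl (SimpleGraph.induce_reachable_iff_of_not_adj_across (Finset.disjoint_coe.2 hdisj)
      hclique1' hclique2' hsupp' hacross)

/-- For any graph `G` of the family `𝒢_η` (two disjoint `η`-cliques `C₁`, `C₂`
with arbitrary edges in between and no other edges), and any query set `S`,
the partition of `S` into connected components of `G[S]` is one of at most two
possibilities: the reachability relation of `G.induce S` either identifies
exactly the vertices of `S ∩ C₁` with each other and those of `S ∩ C₂` with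
each other (all other vertices being isolated), or it merges
`(S ∩ C₁) ∪ (S ∩ C₂)` into a single component (all other vertices isolated). -/
theorem stmt_14 {V : Type*} [DecidableEq V] (C₁ C₂ : Finset V) (η : ℕ)
    (hC₁ : C₁.card = η) (hC₂ : C₂.card = η) (hdisj : Disjoint C₁ C₂)
    (G : SimpleGraph V)
    (hclique1 : ∀ u ∈ C₁, ∀ v ∈ C₁, u ≠ v → G.Adj u v)
    (hclique2 : ∀ u ∈ C₂, ∀ v ∈ C₂, u ≠ v → G.Adj u v)
    (hsupp : ∀ u v : V, G.Adj u v → (u ∈ C₁ ∪ C₂ ∧ v ∈ C₁ ∪ C₂))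
    (S : Set V) :
    (∀ x y : S, (G.induce S).Reachable x y ↔
        x = y ∨ ((x : V) ∈ C₁ ∧ (y : V) ∈ C₁) ∨ ((x : V) ∈ C₂ ∧ (y : V) ∈ C₂)) ∨
    (∀ x y : S, (G.induce S).Reachable x y ↔
        x = y ∨ ((x : V) ∈ C₁ ∪ C₂ ∧ (y : V) ∈ C₁ ∪ C₂)) :=
  stmt_14_general C₁ C₂ hdisj G hclique1 hclique2 hsupp S
end
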